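/- Let G be a finite graph and let H be a W-cloud in G for some W ⊆ V(G) that is (s, 5ε)-tame and has the smallest number of vertices among all (s, 5ε)-tame W-clouds. Let U ⊆ W be a smallest set such that |U| ≥ (1−5ε)|W| and |V(H_u)| ≤ |V(H_v)| for every u ∈ U and v ∈ W \ U. Then all the components H_v with v ∈ W \ U have the same number of vertices. -/
import Mathlib


open Finset

universe u

variable {V : Type u} [Fintype V] [DecidableEq V]

/-- `u` and `v` both belong to the subgraph `H` and are connected in `H`. -/
def CReach {G : SimpleGraph V} (H : G.Subgraph) (u v : V) : Prop :=
  ∃ (hu : u ∈ H.verts) (hv : v ∈ H.verts), H.coe.Reachable ⟨u, hu⟩ ⟨v, hv⟩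

/-- The vertex set of the connected component `H_w` of `H` containing `w`. -/
def cloudComp {G : SimpleGraph V} (H : G.Subgraph) (w : V) : Set V :=
  {v | CReach H w v}

/-- `n(H, U) = Σ_{w ∈ U} |V(H_w)|`. -/
noncomputable def cloudSize {G : SimpleGraph V} (H : G.Subgraph) (U : Finset V) : ℕ :=
  ∑ w ∈ U, (cloudComp H w).ncard

/-- `H` is a `W`-cloud in `G`: a forest subgraph of `G` in which every connected
component contains exactly one vertex of `W`. -/
def IsCloud (G : SimpleGraph V) (W : Finset V) (H : G.Subgraph) : Prop :=
  H.coe.IsAcyclic ∧ (↑W : Set V) ⊆ H.verts ∧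
    ∀ v ∈ H.verts, ∃! w, w ∈ W ∧ CReach H v w

set_option linter.unusedSectionVars false
set_option linter.unusedVariables false

section Aux

variable {G : SimpleGraph V} {H : G.Subgraph}

lemma creach_self {a : V} (h : a ∈ H.verts) : CReach H a a := ⟨h, h, .refl _⟩

lemma CReach.symm {a b : V} (h : CReach H a b) : CReach H b a := by
  obtain ⟨ha, hb, hr⟩ := h; exact ⟨hb, ha, hr.symm⟩

lemma CReach.trans {a b c : V} (h1 : CReach H a b) (h2 : CReach H b c) : CReach H a c := by
  obtain ⟨ha, hb, hr⟩ := h1; obtain ⟨hb', hc, hr'⟩ := h2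
  exact ⟨ha, hc, hr.trans hr'⟩

lemma creach_of_adj {a b : V} (h : H.Adj a b) : CReach H a b :=
  ⟨H.edge_vert h, H.edge_vert h.symm, SimpleGraph.Adj.reachable (by simpa using h)⟩

lemma creach_mono {H' : G.Subgraph} (hle : H ≤ H') {a b : V} (hr : CReach H a b) :
    CReach H' a b := by
  obtain ⟨ha, hb, hr⟩ := hr
  exact ⟨hle.1 ha, hle.1 hb, hr.map (SimpleGraph.Subgraph.inclusion hle)⟩

lemma creach_deleteVerts_of_walk {x : V} :
    ∀ {a b : H.verts} (p : H.coe.Walk a b), (∀ c ∈ p.support, (c : V) ≠ x) →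
      CReach (H.deleteVerts {x}) a b := by
  intro a b p
  induction p with
  | @nil u =>
    intro h
    have : (u : V) ∈ (H.deleteVerts {x}).verts := by
      simp only [SimpleGraph.Subgraph.deleteVerts_verts, Set.mem_diff, Set.mem_singleton_iff]
      exact ⟨u.2, h u (by simp)⟩
    exact creach_self this
  | @cons u v w hadj p ih =>
    intro h
    have h1 : CReach (H.deleteVerts {x}) u v := by
      apply creach_of_adj
      rw [SimpleGraph.Subgraph.deleteVerts_adj]
      refine ⟨u.2, ?_, v.2, ?_, by simpa using hadj⟩
      · simpa using h u (by simp)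
      · simpa using h v (by simp [SimpleGraph.Walk.support_cons])
    exact h1.trans (ih fun c hc => h c (by simp [SimpleGraph.Walk.support_cons, hc]))

lemma exists_walk_avoid {α : Type*} [DecidableEq α] {G' : SimpleGraph α} {r x y : α}
    (hmax : ∀ z, G'.Reachable r z → G'.dist r z ≤ G'.dist r x)
    (hy : G'.Reachable r y) (hne : y ≠ x) :
    ∃ p : G'.Walk r y, x ∉ p.support := by
  obtain ⟨p, _, hl⟩ := hy.exists_path_of_dist
  refine ⟨p, fun hx => ?_⟩
  have h1 : G'.dist r x ≤ (p.takeUntil x hx).length := SimpleGraph.dist_le _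
  have h2 := congr_arg SimpleGraph.Walk.length (p.take_spec hx)
  rw [SimpleGraph.Walk.length_append] at h2
  have h3 : (p.dropUntil x hx).length ≠ 0 := fun h0 =>
    hne (SimpleGraph.Walk.eq_of_length_eq_zero h0).symm
  have h4 := hmax y hy
  omega

lemma reachable_of_mem_support {α : Type*} [DecidableEq α] {G' : SimpleGraph α} {a b c : α}
    (p : G'.Walk a b) (hc : c ∈ p.support) : G'.Reachable a c :=
  (p.takeUntil c hc).reachable

lemma delete_farthest {G : SimpleGraph V} {W : Finset V} {H : G.Subgraph}
    (hcloud : IsCloud G W H) {v₂ : V} (hv₂W : v₂ ∈ W)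
    (hbig : 2 ≤ (cloudComp H v₂).ncard) :
    ∃ H' : G.Subgraph,
      IsCloud G W H' ∧
      (∀ w ∈ W, w ≠ v₂ → cloudComp H' w = cloudComp H w) ∧
      (cloudComp H' v₂).ncard + 1 = (cloudComp H v₂).ncard ∧
      H'.verts.ncard + 1 = H.verts.ncard := by
  classical
  obtain ⟨hac, hWsub, huniq⟩ := hcloud
  have hv₂v : v₂ ∈ H.verts := hWsub (Finset.mem_coe.mpr hv₂W)
  set r : H.verts := ⟨v₂, hv₂v⟩ with hr
  set S : Finset H.verts := Finset.univ.filter (fun z => H.coe.Reachable r z) with hS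
  have hrS : r ∈ S := by
    simp only [hS, Finset.mem_filter, Finset.mem_univ, true_and]
    exact SimpleGraph.Reachable.refl r
  obtain ⟨x0, hx0S, hx0max⟩ := S.exists_max_image (fun z => H.coe.dist r z) ⟨r, hrS⟩
  have hx0r : H.coe.Reachable r x0 := by
    simpa [hS] using hx0S
  have hmax' : ∀ z, H.coe.Reachable r z → H.coe.dist r z ≤ H.coe.dist r x0 := by
    intro z hz
    exact hx0max z (by simp [hS, hz])
  -- a vertex different from v₂ in the component
  obtain ⟨y, hy, hyne⟩ := Set.exists_ne_of_one_lt_ncard (s := cloudComp H v₂) (by omega) v₂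
  obtain ⟨_, hyv, hyr⟩ := hy
  have hdy : 0 < H.coe.dist r ⟨y, hyv⟩ :=
    SimpleGraph.Reachable.pos_dist_of_ne hyr (fun h => hyne (congrArg Subtype.val h).symm)
  have hx0ne : x0 ≠ r := by
    intro h
    have := hmax' ⟨y, hyv⟩ hyr
    rw [h, SimpleGraph.dist_self] at this
    omega
  set x : V := (x0 : V) with hx
  have hxne : x ≠ v₂ := fun h => hx0ne (Subtype.ext h)
  have hxcomp : CReach H v₂ x := ⟨hv₂v, x0.2, hx0r⟩
  have hxW : x ∉ W := by
    intro hxWm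
    obtain ⟨w, _, huni⟩ := huniq x x0.2
    have e1 : x = w := huni x ⟨hxWm, creach_self x0.2⟩
    have e2 : v₂ = w := huni v₂ ⟨hv₂W, hxcomp.symm⟩
    exact hxne (e1.trans e2.symm)
  have key : ∀ y, CReach H v₂ y → y ≠ x → CReach (H.deleteVerts {x}) v₂ y := by
    intro y hy hyx
    obtain ⟨h1, h2, hr2⟩ := hy
    have hr3 : H.coe.Reachable r ⟨y, h2⟩ := hr2
    obtain ⟨p, hp⟩ := exists_walk_avoid hmax' hr3 (fun h => hyx (congrArg Subtype.val h))
    exact creach_deleteVerts_of_walk p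
      (fun c hc hcx => hp (by rwa [show c = x0 from Subtype.ext hcx] at hc))
  have key2 : ∀ w y, ¬ CReach H w x → CReach H w y → CReach (H.deleteVerts {x}) w y := by
    intro w y hnot hwy
    obtain ⟨h1, h2, hr2⟩ := hwy
    obtain ⟨p⟩ := hr2
    apply creach_deleteVerts_of_walk p
    intro c hc hcx
    apply hnot
    refine ⟨h1, x0.2, ?_⟩
    have := reachable_of_mem_support p hc
    rwa [show c = x0 from Subtype.ext hcx] at this
  have hCnotx : ∀ w ∈ W, w ≠ v₂ → ¬ CReach H w x := by
    intro w hw hwne hcr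
    obtain ⟨w', _, huni⟩ := huniq x x0.2
    have e1 : w = w' := huni w ⟨hw, hcr.symm⟩
    have e2 : v₂ = w' := huni v₂ ⟨hv₂W, hxcomp.symm⟩
    exact hwne (e1.trans e2.symm)
  refine ⟨H.deleteVerts {x}, ?_, ?_, ?_, ?_⟩
  · refine ⟨?_, ?_, ?_⟩
    · intro v c hc
      exact hac (c.map (SimpleGraph.Subgraph.inclusion H.deleteVerts_le))
        (hc.map (SimpleGraph.Subgraph.inclusion.injective H.deleteVerts_le))
    · intro w hw
      rw [SimpleGraph.Subgraph.deleteVerts_verts]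
      exact ⟨hWsub hw, fun h => hxW (by rwa [Set.mem_singleton_iff] at h ▸ hw)⟩
    · intro v hv
      rw [SimpleGraph.Subgraph.deleteVerts_verts] at hv
      obtain ⟨hv1, hv2⟩ := hv
      have hvx : v ≠ x := by simpa using hv2
      obtain ⟨w, ⟨hwW, hwR⟩, huni⟩ := huniq v hv1
      refine ⟨w, ⟨hwW, ?_⟩, ?_⟩
      · by_cases hwv : w = v₂
        · subst hwv
          exact (key v hwR.symm hvx).symm
        · exact (key2 w v (hCnotx w hwW hwv) hwR.symm).symm
      · intro w' hw'
        exact huni w' ⟨hw'.1, creach_mono H.deleteVerts_le hw'.2⟩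
  · intro w hwW hwne
    ext y
    constructor
    · exact fun hy => creach_mono H.deleteVerts_le hy
    · intro hy
      exact key2 w y (hCnotx w hwW hwne) hy
  · have hceq : cloudComp (H.deleteVerts {x}) v₂ = cloudComp H v₂ \ {x} := by
      ext y
      constructor
      · intro hy
        refine ⟨creach_mono H.deleteVerts_le hy, ?_⟩
        obtain ⟨_, h2, _⟩ := hy
        rw [SimpleGraph.Subgraph.deleteVerts_verts] at h2
        simpa using h2.2
      · intro ⟨hy, hyx⟩
        exact key y hy (by simpa using hyx)
    rw [hceq]
    exact Set.ncard_diff_singleton_add_one hxcomp (Set.toFinite _)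
  · rw [SimpleGraph.Subgraph.deleteVerts_verts]
    exact Set.ncard_diff_singleton_add_one x0.2 (Set.toFinite _)

end Aux

/-- `H` is an `(s, ε)`-tame `W`-cloud: `n(H, U) ≥ s` for every `U ⊆ W` with
`|U| ≥ (1 - ε)|W|`. -/
def IsTameCloud (G : SimpleGraph V) (W : Finset V) (H : G.Subgraph) (s ε : ℝ) : Prop :=
  IsCloud G W H ∧
    ∀ U ⊆ W, (1 - ε) * (W.card : ℝ) ≤ (U.card : ℝ) → s ≤ (cloudSize H U : ℝ)

/-- If `H` is an `(s, 5ε)`-tame `W`-cloud with the smallest number of vertices and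
`U ⊆ W` is a smallest set with `|U| ≥ (1 - 5ε)|W|` such that `|V(H_u)| ≤ |V(H_v)|` for
all `u ∈ U`, `v ∈ W \ U`, then all components `H_v` with `v ∈ W \ U` have the same
number of vertices. -/
theorem large_components_same_size (G : SimpleGraph V) (W : Finset V) (s ε : ℝ)
    (hs : 0 < s) (hε : 0 < ε)
    (H : G.Subgraph) (hH : IsTameCloud G W H s (5 * ε))
    (hHmin : ∀ H' : G.Subgraph, IsTameCloud G W H' s (5 * ε) →
      H.verts.ncard ≤ H'.verts.ncard)
    (U : Finset V) (hUW : U ⊆ W)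
    (hUcard : (1 - 5 * ε) * (W.card : ℝ) ≤ (U.card : ℝ))
    (hUle : ∀ u ∈ U, ∀ v ∈ W \ U, (cloudComp H u).ncard ≤ (cloudComp H v).ncard)
    (hUmin : ∀ U' : Finset V, U' ⊆ W → (1 - 5 * ε) * (W.card : ℝ) ≤ (U'.card : ℝ) →
      (∀ u ∈ U', ∀ v ∈ W \ U', (cloudComp H u).ncard ≤ (cloudComp H v).ncard) →
      U.card ≤ U'.card) :
    ∀ v₁ ∈ W \ U, ∀ v₂ ∈ W \ U,
      (cloudComp H v₁).ncard = (cloudComp H v₂).ncard := by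
  classical
  by_contra hcon
  push_neg at hcon
  obtain ⟨p, hp, q, hq, hpq⟩ := hcon
  obtain ⟨hcloud, htame⟩ := hH
  set f : V → ℕ := fun w => (cloudComp H w).ncard with hf
  obtain ⟨v₂, hv₂, hmaxf⟩ := (W \ U).exists_max_image f ⟨p, hp⟩
  have hv1 : ∃ v₁ ∈ W \ U, f v₁ < f v₂ := by
    rcases lt_or_eq_of_le (hmaxf p hp) with h | h
    · exact ⟨p, hp, h⟩
    rcases lt_or_eq_of_le (hmaxf q hq) with h' | h'
    · exact ⟨q, hq, h'⟩
    · exact absurd (h.trans h'.symm) hpq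
  obtain ⟨v₁, hv₁, hlt⟩ := hv1
  have hv₂W : v₂ ∈ W := (Finset.mem_sdiff.mp hv₂).1
  have hv₁W : v₁ ∈ W := (Finset.mem_sdiff.mp hv₁).1
  have hv₂U : v₂ ∉ U := (Finset.mem_sdiff.mp hv₂).2
  have hv₁U : v₁ ∉ U := (Finset.mem_sdiff.mp hv₁).2
  have hne12 : v₁ ≠ v₂ := fun h => by simp [h] at hlt
  have hf1 : 1 ≤ f v₁ := by
    have h1 : v₁ ∈ cloudComp H v₁ := creach_self (hcloud.2.1 (Finset.mem_coe.mpr hv₁W))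
    have h2 := (Set.ncard_pos (Set.toFinite _)).mpr ⟨v₁, h1⟩
    exact h2
  have hbig : 2 ≤ f v₂ := by omega
  obtain ⟨H', hcloud', hcompeq, hcompv₂, hvertseq⟩ := delete_farthest hcloud hv₂W hbig
  have hle1 : ∀ w ∈ insert v₁ U, f w ≤ f v₁ := by
    intro w hw
    rcases Finset.mem_insert.mp hw with h | h
    · exact le_of_eq (by rw [h])
    · exact hUle w h v₁ hv₁
  have hsumeq : ∀ T : Finset V, T ⊆ W → v₂ ∉ T → cloudSize H' T = cloudSize H T := by
    intro T hTW hTv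
    apply Finset.sum_congr rfl
    intro w hw
    rw [hcompeq w (hTW hw) (fun h => hTv (h ▸ hw))]
  have htame' : IsTameCloud G W H' s (5 * ε) := by
    refine ⟨hcloud', ?_⟩
    intro U' hU'W hU'card
    by_cases hv₂U' : v₂ ∈ U'
    · have hE : cloudSize H (U'.erase v₂) = ∑ z ∈ U'.erase v₂, f z := rfl
      have heraseW : U'.erase v₂ ⊆ W := (Finset.erase_subset _ _).trans hU'W
      have h1a : f v₂ + cloudSize H (U'.erase v₂) = cloudSize H U' :=
        Finset.add_sum_erase U' f hv₂U'
      have h1b : (cloudComp H' v₂).ncard + cloudSize H' (U'.erase v₂) = cloudSize H' U' :=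
        Finset.add_sum_erase U' (fun w => (cloudComp H' w).ncard) hv₂U'
      have h1c : cloudSize H' (U'.erase v₂) = cloudSize H (U'.erase v₂) :=
        hsumeq _ heraseW (Finset.notMem_erase _ _)
      have hcv : (cloudComp H' v₂).ncard + 1 = f v₂ := hcompv₂
      have h1 : cloudSize H U' = cloudSize H' U' + 1 := by omega
      by_cases hall : ∀ w ∈ insert v₁ U, w ∈ U'
      · have hsub : insert v₂ (insert v₁ U) ⊆ U' := by
          intro w hw
          rcases Finset.mem_insert.mp hw with h | h
          · exact h ▸ hv₂U'
          · exact hall w h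
        have hnm1 : v₂ ∉ insert v₁ U := by
          simp only [Finset.mem_insert]
          push_neg
          exact ⟨Ne.symm hne12, hv₂U⟩
        have hcard2 : U.card + 2 ≤ U'.card := by
          have hc := Finset.card_le_card hsub
          rw [Finset.card_insert_of_notMem hnm1, Finset.card_insert_of_notMem hv₁U] at hc
          omega
        have hUccard : (U.card : ℝ) ≤ ((U'.erase v₂).card : ℝ) := by
          rw [Finset.card_erase_of_mem hv₂U']
          exact_mod_cast by omega
        have hs'' := htame (U'.erase v₂) heraseW (hUcard.trans hUccard)
        have h3 : cloudSize H (U'.erase v₂) ≤ cloudSize H' U' := by omega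
        exact hs''.trans (by exact_mod_cast h3)
      · push_neg at hall
        obtain ⟨w, hwU, hwU'⟩ := hall
        have hwW : w ∈ W := by
          rcases Finset.mem_insert.mp hwU with h | h
          · exact h ▸ hv₁W
          · exact hUW h
        have hwnotin : w ∉ U'.erase v₂ := fun h => hwU' (Finset.mem_of_mem_erase h)
        have hU''W : insert w (U'.erase v₂) ⊆ W := by
          intro z hz
          rcases Finset.mem_insert.mp hz with h | h
          · exact h ▸ hwW
          · exact heraseW h
        have hcard : (insert w (U'.erase v₂)).card = U'.card := by
          rw [Finset.card_insert_of_notMem hwnotin, Finset.card_erase_of_mem hv₂U']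
          have : 1 ≤ U'.card := Finset.card_pos.mpr ⟨v₂, hv₂U'⟩
          omega
        have hs'' := htame (insert w (U'.erase v₂)) hU''W (by rw [hcard]; exact hU'card)
        have h2 : cloudSize H (insert w (U'.erase v₂)) = f w + cloudSize H (U'.erase v₂) :=
          Finset.sum_insert hwnotin
        have hfw : f w < f v₂ := lt_of_le_of_lt (hle1 w hwU) hlt
        have h3 : cloudSize H (insert w (U'.erase v₂)) ≤ cloudSize H' U' := by omega
        exact hs''.trans (by exact_mod_cast h3)
    · rw [hsumeq U' hU'W hv₂U']
      exact htame U' hU'W hU'card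
  have hfin := hHmin H' htame'
  omega
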